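/- Let n ≥ 1 and let D̃* = L̃^n be the n-fold iterate of the operator (L̃g)(r) = −(1/(2π))·g′(r)/sin r. Then for every smooth function g : ℝ → ℂ and every r ∈ ℝ with sin r ≠ 0, the spherical intertwining identity holds: (D̃*g)″(r) + 2n·(cos r/sin r)·(D̃*g)′(r) = (D̃*(g″ + n²·g))(r). -/
import Mathlib


/-- The operator `L̃` given by `(L̃ g)(r) = -(1/(2π)) g'(r)/sin r`. -/
noncomputable def Lsph (g : ℝ → ℂ) : ℝ → ℂ :=
  fun r => -(1 / (2 * (Real.pi : ℂ))) * deriv g r / (Real.sin r : ℂ)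

open Real Set Filter

namespace LsphAux

def U : Set ℝ := {r | Real.sin r ≠ 0}

lemma isOpen_U : IsOpen U := isOpen_ne.preimage Real.continuous_sin

lemma hasDerivAt_sinC (s : ℝ) :
    HasDerivAt (fun t : ℝ => ((Real.sin t : ℂ))) (Real.cos s : ℂ) s :=
  (Real.hasDerivAt_sin s).ofReal_comp

lemma hasDerivAt_cosC (s : ℝ) :
    HasDerivAt (fun t : ℝ => ((Real.cos t : ℂ))) (-(Real.sin s : ℂ)) s := by
  have := (Real.hasDerivAt_cos s).ofReal_comp
  simpa using this

lemma contDiffOn_sinC : ContDiffOn ℝ (⊤ : ℕ∞) (fun t : ℝ => ((Real.sin t : ℂ))) U :=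
  (Complex.ofRealCLM.contDiff.comp Real.contDiff_sin).contDiffOn

lemma top_add_one : ((⊤ : ℕ∞) : WithTop ℕ∞) + 1 ≤ ((⊤ : ℕ∞) : WithTop ℕ∞) := by
  norm_num

lemma smooth_deriv {h : ℝ → ℂ} (hh : ContDiffOn ℝ (⊤ : ℕ∞) h U) :
    ContDiffOn ℝ (⊤ : ℕ∞) (deriv h) U :=
  hh.deriv_of_isOpen isOpen_U top_add_one

lemma diffAt_of_smooth {h : ℝ → ℂ} (hh : ContDiffOn ℝ (⊤ : ℕ∞) h U) {s : ℝ}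
    (hs : s ∈ U) : DifferentiableAt ℝ h s :=
  (hh.differentiableOn (by norm_num)).differentiableAt (isOpen_U.mem_nhds hs)

lemma hasDerivAt_of_smooth {h : ℝ → ℂ} (hh : ContDiffOn ℝ (⊤ : ℕ∞) h U) {s : ℝ}
    (hs : s ∈ U) : HasDerivAt h (deriv h s) s :=
  (diffAt_of_smooth hh hs).hasDerivAt

lemma smooth_Lsph {h : ℝ → ℂ} (hh : ContDiffOn ℝ (⊤ : ℕ∞) h U) :
    ContDiffOn ℝ (⊤ : ℕ∞) (Lsph h) U := by
  intro x hx
  have hnum : ContDiffAt ℝ (⊤ : ℕ∞) (fun r => -(1 / (2 * (Real.pi : ℂ))) * deriv h r) x :=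
    ((contDiffOn_const.mul (smooth_deriv hh)) x hx).contDiffAt (isOpen_U.mem_nhds hx)
  have hden := (contDiffOn_sinC x hx).contDiffAt (isOpen_U.mem_nhds hx)
  have hdiv : ContDiffAt ℝ (⊤ : ℕ∞)
      (fun r => -(1 / (2 * (Real.pi : ℂ))) * deriv h r * ((Real.sin r : ℂ))⁻¹) x :=
    hnum.mul (hden.inv (show ((Real.sin x : ℂ)) ≠ 0 by exact_mod_cast hx))
  have : ContDiffWithinAt ℝ (⊤ : ℕ∞)
      (fun r => -(1 / (2 * (Real.pi : ℂ))) * deriv h r / (Real.sin r : ℂ)) U x := by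
    simp only [div_eq_mul_inv]
    exact hdiv.contDiffWithinAt
  exact this

lemma deriv_Lsph {h : ℝ → ℂ} (hh : ContDiffOn ℝ (⊤ : ℕ∞) h U) {s : ℝ} (hs : s ∈ U) :
    deriv (Lsph h) s = -(1 / (2 * (Real.pi : ℂ))) *
      (deriv (deriv h) s * (Real.sin s : ℂ) - deriv h s * (Real.cos s : ℂ))
        / ((Real.sin s : ℂ) * (Real.sin s : ℂ)) := by
  have hS : ((Real.sin s : ℂ)) ≠ 0 := by exact_mod_cast hs
  have h1 : HasDerivAt (deriv h) (deriv (deriv h) s) s :=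
    hasDerivAt_of_smooth (smooth_deriv hh) hs
  have h2 : HasDerivAt (fun t : ℝ => -(1 / (2 * (Real.pi : ℂ))) * deriv h t / (Real.sin t : ℂ))
      ((-(1 / (2 * (Real.pi : ℂ))) * deriv (deriv h) s * (Real.sin s : ℂ) -
        -(1 / (2 * (Real.pi : ℂ))) * deriv h s * (Real.cos s : ℂ)) / (Real.sin s : ℂ) ^ 2) s :=
    (h1.const_mul _).div (hasDerivAt_sinC s) hS
  have := h2.deriv
  rw [show (fun t : ℝ => -(1 / (2 * (Real.pi : ℂ))) * deriv h t / (Real.sin t : ℂ)) = Lsph h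
    from rfl] at this
  rw [this]; ring

lemma core {h : ℝ → ℂ} (hh : ContDiffOn ℝ (⊤ : ℕ∞) h U) (K C0 : ℂ) {s : ℝ}
    (hs : s ∈ U) :
    deriv (deriv (Lsph h)) s
      + 2 * (K + 1) * ((Real.cos s : ℂ) / (Real.sin s : ℂ)) * deriv (Lsph h) s
      + C0 * Lsph h s
    = Lsph (fun t => deriv (deriv h) t
        + 2 * K * ((Real.cos t : ℂ) / (Real.sin t : ℂ)) * deriv h t
        + (2 * K + 1 + C0) * h t) s := by
  have hS : ((Real.sin s : ℂ)) ≠ 0 := by exact_mod_cast hs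
  have hpi : ((Real.pi : ℂ)) ≠ 0 := by
    exact_mod_cast Real.pi_ne_zero
  set c : ℂ := -(1 / (2 * (Real.pi : ℂ))) with hc
  have hh1 : ContDiffOn ℝ (⊤ : ℕ∞) (deriv h) U := smooth_deriv hh
  have hh2 : ContDiffOn ℝ (⊤ : ℕ∞) (deriv (deriv h)) U := smooth_deriv hh1
  have hd1 : HasDerivAt h (deriv h s) s := hasDerivAt_of_smooth hh hs
  have hd2 : HasDerivAt (deriv h) (deriv (deriv h) s) s := hasDerivAt_of_smooth hh1 hs
  have hd3 : HasDerivAt (deriv (deriv h)) (deriv (deriv (deriv h)) s) s :=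
    hasDerivAt_of_smooth hh2 hs
  -- second derivative of Lsph h
  have hev : deriv (Lsph h) =ᶠ[nhds s] fun t =>
      c * (deriv (deriv h) t * (Real.sin t : ℂ) - deriv h t * (Real.cos t : ℂ))
        / ((Real.sin t : ℂ) * (Real.sin t : ℂ)) := by
    filter_upwards [isOpen_U.mem_nhds hs] with t ht
    exact deriv_Lsph hh ht
  have hN : HasDerivAt (fun t : ℝ =>
      deriv (deriv h) t * (Real.sin t : ℂ) - deriv h t * (Real.cos t : ℂ))
      ((deriv (deriv (deriv h)) s * (Real.sin s : ℂ)
          + deriv (deriv h) s * (Real.cos s : ℂ))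
        - (deriv (deriv h) s * (Real.cos s : ℂ) + deriv h s * (-(Real.sin s : ℂ)))) s :=
    (hd3.mul (hasDerivAt_sinC s)).sub (hd2.mul (hasDerivAt_cosC s))
  have hD : HasDerivAt (fun t : ℝ => ((Real.sin t : ℂ)) * ((Real.sin t : ℂ)))
      ((Real.cos s : ℂ) * (Real.sin s : ℂ) + (Real.sin s : ℂ) * (Real.cos s : ℂ)) s :=
    (hasDerivAt_sinC s).mul (hasDerivAt_sinC s)
  have hF : HasDerivAt (fun t =>
      c * (deriv (deriv h) t * (Real.sin t : ℂ) - deriv h t * (Real.cos t : ℂ))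
        / ((Real.sin t : ℂ) * (Real.sin t : ℂ)))
      ((c * ((deriv (deriv (deriv h)) s * (Real.sin s : ℂ)
          + deriv (deriv h) s * (Real.cos s : ℂ))
        - (deriv (deriv h) s * (Real.cos s : ℂ) + deriv h s * (-(Real.sin s : ℂ))))
          * ((Real.sin s : ℂ) * (Real.sin s : ℂ))
        - c * (deriv (deriv h) s * (Real.sin s : ℂ) - deriv h s * (Real.cos s : ℂ))
          * ((Real.cos s : ℂ) * (Real.sin s : ℂ) + (Real.sin s : ℂ) * (Real.cos s : ℂ)))
            / ((Real.sin s : ℂ) * (Real.sin s : ℂ)) ^ 2) s :=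
    (hN.const_mul c).div hD (mul_ne_zero hS hS)
  have h2nd : deriv (deriv (Lsph h)) s = _ := hev.deriv_eq.trans hF.deriv
  -- derivative of the inner function on the RHS
  have hQ : HasDerivAt (fun t : ℝ => ((Real.cos t : ℂ)) / ((Real.sin t : ℂ)))
      ((-(Real.sin s : ℂ) * (Real.sin s : ℂ) - (Real.cos s : ℂ) * (Real.cos s : ℂ))
        / (Real.sin s : ℂ) ^ 2) s :=
    (hasDerivAt_cosC s).div (hasDerivAt_sinC s) hS
  have hG : HasDerivAt (fun t => deriv (deriv h) t
        + 2 * K * ((Real.cos t : ℂ) / (Real.sin t : ℂ)) * deriv h t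
        + (2 * K + 1 + C0) * h t)
      (deriv (deriv (deriv h)) s
        + ((2 * K * ((-(Real.sin s : ℂ) * (Real.sin s : ℂ)
              - (Real.cos s : ℂ) * (Real.cos s : ℂ)) / (Real.sin s : ℂ) ^ 2))
            * deriv h s
          + 2 * K * ((Real.cos s : ℂ) / (Real.sin s : ℂ)) * deriv (deriv h) s)
        + (2 * K + 1 + C0) * deriv h s) s :=
    (hd3.add (((hQ.const_mul (2 * K)).mul hd2))).add (hd1.const_mul _)
  -- assemble
  rw [h2nd]
  show _ = -(1 / (2 * (Real.pi : ℂ))) * deriv _ s / (Real.sin s : ℂ)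
  rw [hG.deriv, deriv_Lsph hh hs]
  show _ + C0 * (-(1 / (2 * (Real.pi : ℂ))) * deriv h s / (Real.sin s : ℂ)) = _
  rw [← hc]
  set S : ℂ := ((Real.sin s : ℂ)) with hSdef
  set Cc : ℂ := ((Real.cos s : ℂ)) with hCdef
  set a1 : ℂ := deriv h s
  set a2 : ℂ := deriv (deriv h) s
  set a3 : ℂ := deriv (deriv (deriv h)) s
  have hS2 : S * S ≠ 0 := mul_ne_zero hS hS
  field_simp
  ring

end LsphAux

namespace LsphAux

lemma Lsph_congr {F G : ℝ → ℂ} (h : Set.EqOn F G U) : Set.EqOn (Lsph F) (Lsph G) U := by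
  intro s hs
  have : deriv F s = deriv G s :=
    Filter.EventuallyEq.deriv_eq (h.eventuallyEq_of_mem (isOpen_U.mem_nhds hs))
  simp only [Lsph, this]

lemma Lsph_iter_congr (n : ℕ) {F G : ℝ → ℂ} (h : Set.EqOn F G U) :
    Set.EqOn (Lsph^[n] F) (Lsph^[n] G) U := by
  induction n generalizing F G with
  | zero => simpa using h
  | succ m ih =>
    rw [Function.iterate_succ_apply, Function.iterate_succ_apply]
    exact ih (Lsph_congr h)

lemma smooth_iter {h : ℝ → ℂ} (hh : ContDiffOn ℝ (⊤ : ℕ∞) h U) (n : ℕ) :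
    ContDiffOn ℝ (⊤ : ℕ∞) (Lsph^[n] h) U := by
  induction n generalizing h with
  | zero => simpa using hh
  | succ m ih =>
    rw [Function.iterate_succ_apply]
    exact ih (smooth_Lsph hh)

lemma master (n : ℕ) : ∀ (K : ℂ) (g : ℝ → ℂ), ContDiffOn ℝ (⊤ : ℕ∞) g U → ∀ r ∈ U,
    deriv (deriv (Lsph^[n] g)) r
      + 2 * ((n : ℂ) + K) * ((Real.cos r : ℂ) / (Real.sin r : ℂ)) * deriv (Lsph^[n] g) r
    = Lsph^[n] (fun s => deriv (deriv g) s
        + 2 * K * ((Real.cos s : ℂ) / (Real.sin s : ℂ)) * deriv g s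
        + ((n : ℂ) ^ 2 + 2 * (n : ℂ) * K) * g s) r := by
  induction n with
  | zero =>
    intro K g hg r hr
    simp only [Function.iterate_zero_apply, Nat.cast_zero]
    ring
  | succ m ih =>
    intro K g hg r hr
    have hLg : ContDiffOn ℝ (⊤ : ℕ∞) (Lsph g) U := smooth_Lsph hg
    have step := ih (K + 1) (Lsph g) hLg r hr
    rw [Function.iterate_succ_apply]
    have hcoef : 2 * (((m : ℂ) + 1) + K) = 2 * ((m : ℂ) + (K + 1)) := by ring
    rw [show ((m + 1 : ℕ) : ℂ) = (m : ℂ) + 1 by push_cast; ring, hcoef, step]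
    -- now rewrite the inner function using the core identity
    have heq : Set.EqOn
        (fun s => deriv (deriv (Lsph g)) s
          + 2 * (K + 1) * ((Real.cos s : ℂ) / (Real.sin s : ℂ)) * deriv (Lsph g) s
          + ((m : ℂ) ^ 2 + 2 * (m : ℂ) * (K + 1)) * Lsph g s)
        (Lsph (fun s => deriv (deriv g) s
          + 2 * K * ((Real.cos s : ℂ) / (Real.sin s : ℂ)) * deriv g s
          + (2 * K + 1 + ((m : ℂ) ^ 2 + 2 * (m : ℂ) * (K + 1))) * g s)) U := by
      intro s hs
      exact core hg K ((m : ℂ) ^ 2 + 2 * (m : ℂ) * (K + 1)) hs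
    have := Lsph_iter_congr m heq hr
    rw [this]
    rw [← Function.iterate_succ_apply]
    have hfun : (fun s => deriv (deriv g) s
          + 2 * K * ((Real.cos s : ℂ) / (Real.sin s : ℂ)) * deriv g s
          + (2 * K + 1 + ((m : ℂ) ^ 2 + 2 * (m : ℂ) * (K + 1))) * g s)
        = (fun s => deriv (deriv g) s
          + 2 * K * ((Real.cos s : ℂ) / (Real.sin s : ℂ)) * deriv g s
          + (((m : ℂ) + 1) ^ 2 + 2 * ((m : ℂ) + 1) * K) * g s) := by
      funext s; ring
    rw [hfun, show ((m : ℂ) + 1) = ((m + 1 : ℕ) : ℂ) by push_cast; ring]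

end LsphAux


/-- Intertwining property of `D̃* = L̃^n` with the radial spherical Laplacian
on `S^{2n+1}`. -/
theorem stmt_1 (n : ℕ) (hn : 1 ≤ n) (g : ℝ → ℂ) (hg : ContDiff ℝ (⊤ : ℕ∞) g)
    (r : ℝ) (hr : Real.sin r ≠ 0) :
    deriv (deriv (Lsph^[n] g)) r
      + 2 * (n : ℂ) * ((Real.cos r : ℂ) / (Real.sin r : ℂ)) * deriv (Lsph^[n] g) r
      = Lsph^[n] (fun s => deriv (deriv g) s + (n : ℂ) ^ 2 * g s) r := by
  have hr' : r ∈ LsphAux.U := hr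
  have hgU : ContDiffOn ℝ (⊤ : ℕ∞) g LsphAux.U := hg.contDiffOn
  have h := LsphAux.master n 0 g hgU r hr'
  have hfun : (fun s => deriv (deriv g) s
        + 2 * (0 : ℂ) * ((Real.cos s : ℂ) / (Real.sin s : ℂ)) * deriv g s
        + ((n : ℂ) ^ 2 + 2 * (n : ℂ) * 0) * g s)
      = (fun s => deriv (deriv g) s + (n : ℂ) ^ 2 * g s) := by
    funext s; ring
  rw [hfun] at h
  rw [show 2 * ((n : ℂ) + 0) = 2 * (n : ℂ) by ring] at h
  exact h
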